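/- arXiv:2007.09429 — 2 statements merged into one kernel-verified Lean document; each statement's English description precedes it below -/
import Mathlib

section
/- Differential relation dH/d(mse) = β (Eq. (20) of the paper, parametrized by β): let n ≥ 1, e : Fin n → ℝ, Q(β) = Σ_j exp(-β e_j²), p_i(β) = exp(-β e_i²)/Q(β), m(β) = Σ_i p_i(β) e_i², and H(β) = -Σ_i p_i(β) ln p_i(β). Then for every β ∈ ℝ, both m and H are differentiable at β and H'(β) = β · m'(β). -/
/-! The Gibbs entropy satisfies `H = β m + log Q` (take logs of `p_i = exp (-β E_i) / Q`), and
`(log Q)' = -m`, so `H' = m + β m' - m = β m'`. Here the energies are `E_i = e_i²`. -/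

open Real Finset

noncomputable section

namespace Gibbs

variable {ι : Type*} [Fintype ι] (E : ι → ℝ)

def partitionFunction (β : ℝ) : ℝ := ∑ i, exp (-β * E i)

def weight (β : ℝ) (i : ι) : ℝ := exp (-β * E i) / partitionFunction E β

def meanEnergy (β : ℝ) : ℝ := ∑ i, weight E β i * E i

def entropy (β : ℝ) : ℝ := -∑ i, weight E β i * log (weight E β i)

theorem partitionFunction_pos [Nonempty ι] (β : ℝ) : 0 < partitionFunction E β :=
  sum_pos (fun _ _ => exp_pos _) univ_nonempty

theorem hasDerivAt_partitionFunction (β : ℝ) :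
    HasDerivAt (partitionFunction E) (-∑ i, exp (-β * E i) * E i) β := by
  rw [← sum_neg_distrib]
  refine HasDerivAt.fun_sum fun i _ => ?_
  simpa using ((hasDerivAt_id β).neg.mul_const (E i)).exp

theorem meanEnergy_eq_div (β : ℝ) :
    meanEnergy E β = (∑ i, exp (-β * E i) * E i) / partitionFunction E β := by
  simp only [meanEnergy, weight, sum_div, div_mul_eq_mul_div]

theorem sum_weight [Nonempty ι] (β : ℝ) : ∑ i, weight E β i = 1 := by
  simp only [weight, ← sum_div]
  exact div_self (partitionFunction_pos E β).ne'

theorem differentiable_meanEnergy [Nonempty ι] : Differentiable ℝ (meanEnergy E) := by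
  intro β
  have hnum : HasDerivAt (fun b => ∑ i, exp (-b * E i) * E i)
      (∑ i, exp (-β * E i) * (-E i) * E i) β :=
    HasDerivAt.fun_sum fun i _ => by
      simpa using (((hasDerivAt_id β).neg.mul_const (E i)).exp).mul_const (E i)
  rw [funext (meanEnergy_eq_div E)]
  exact hnum.differentiableAt.div (hasDerivAt_partitionFunction E β).differentiableAt
    (partitionFunction_pos E β).ne'

theorem hasDerivAt_log_partitionFunction [Nonempty ι] (β : ℝ) :
    HasDerivAt (fun b => log (partitionFunction E b)) (-meanEnergy E β) β := by
  rw [meanEnergy_eq_div, ← neg_div]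
  exact (hasDerivAt_partitionFunction E β).log (partitionFunction_pos E β).ne'

theorem entropy_eq_mul_meanEnergy_add_log [Nonempty ι] (β : ℝ) :
    entropy E β = β * meanEnergy E β + log (partitionFunction E β) := by
  have hQ := (partitionFunction_pos E β).ne'
  have hterm : ∀ i, weight E β i * log (weight E β i)
      = -(β * (weight E β i * E i)) - weight E β i * log (partitionFunction E β) := fun i => by
    rw [weight, log_div (exp_pos _).ne' hQ, log_exp]
    ring
  rw [entropy, sum_congr rfl fun i _ => hterm i, sum_sub_distrib, sum_neg_distrib, ← mul_sum,
    ← sum_mul, sum_weight, ← meanEnergy]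
  ring

theorem hasDerivAt_entropy [Nonempty ι] (β : ℝ) :
    HasDerivAt (entropy E) (β * deriv (meanEnergy E) β) β := by
  rw [funext (entropy_eq_mul_meanEnergy_add_log E)]
  refine (((hasDerivAt_id' β).fun_mul (differentiable_meanEnergy E β).hasDerivAt).fun_add
    (hasDerivAt_log_partitionFunction E β)).congr_deriv ?_
  ring

end Gibbs

/-- Differential relation `dH/d(mse) = β` (Eq. (20)), parametrized by `β`:
the Gibbs mean squared error `m` and the Gibbs entropy `H` are differentiable
at every `β`, and `H' β = β * m' β`. -/
theorem gibbs_entropy_deriv_eq_beta_mul_mse_deriv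
    (n : ℕ) (hn : 1 ≤ n) (e : Fin n → ℝ)
    (Q : ℝ → ℝ) (hQ : ∀ β, Q β = ∑ j, Real.exp (-β * (e j) ^ 2))
    (p : ℝ → Fin n → ℝ) (hp : ∀ β i, p β i = Real.exp (-β * (e i) ^ 2) / Q β)
    (m : ℝ → ℝ) (hm : ∀ β, m β = ∑ i, p β i * (e i) ^ 2)
    (H : ℝ → ℝ) (hH : ∀ β, H β = -∑ i, p β i * Real.log (p β i))
    (β : ℝ) :
    DifferentiableAt ℝ m β ∧ DifferentiableAt ℝ H β ∧
      deriv H β = β * deriv m β := by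
  have : Nonempty (Fin n) := Fin.pos_iff_nonempty.mp hn
  set E : Fin n → ℝ := fun i => e i ^ 2
  obtain rfl : Q = Gibbs.partitionFunction E := funext hQ
  obtain rfl : p = Gibbs.weight E := funext₂ hp
  obtain rfl : m = Gibbs.meanEnergy E := funext hm
  obtain rfl : H = Gibbs.entropy E := funext hH
  have hH' := Gibbs.hasDerivAt_entropy E β
  exact ⟨Gibbs.differentiable_meanEnergy E β, hH'.differentiableAt, hH'.deriv⟩
end
end

section
/- Existence and uniqueness of the Lagrange multiplier β solving the prescribed-mean-squared-error equation (Eq. (18) of the paper): let n ≥ 1 and e : Fin n → ℝ be such that the squared errors e_i² are not all equal, and set m(β) = ( Σ_i e_i² exp(-β e_i²) ) / ( Σ_i exp(-β e_i²) ). Then for every target value t with min_i e_i² < t < max_i e_i², there exists a unique β ∈ ℝ such that m(β) = t, equivalently such that t · Σ_i exp(-β e_i²) = Σ_i e_i² exp(-β e_i²). -/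
/-!
Shifting the errors by the target, `a i = e i ^ 2 - t`, the equation `m β = t` becomes
`g β = 0` for `g β = ∑ i, a i * exp (-β * a i)`, since `g β = exp (β t) (N β - t S β)`
where `m = N / S`.
Each term `β ↦ a * exp (-β * a)` is antitone, strictly so when `a ≠ 0`, so `g` is strictly
decreasing. As `t` lies strictly between the extreme squared errors, some `a i` is positive
and some negative; the positive terms dominate for `β ≪ 0` and the negative ones for
`β ≫ 0`, so `g` changes sign and has exactly one zero.
-/

open Real Finset

lemma strictAnti_mul_exp_neg_mul {a : ℝ} (ha : a ≠ 0) :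
    StrictAnti fun β : ℝ => a * exp (-β * a) := by
  intro β₁ β₂ hβ
  rcases ha.lt_or_gt with ha | ha
  · exact mul_lt_mul_of_neg_left (exp_lt_exp.mpr (by nlinarith)) ha
  · exact mul_lt_mul_of_pos_left (exp_lt_exp.mpr (by nlinarith)) ha

lemma antitone_mul_exp_neg_mul (a : ℝ) : Antitone fun β : ℝ => a * exp (-β * a) := by
  rcases eq_or_ne a 0 with rfl | ha
  · simp only [zero_mul]
    exact antitone_const
  · exact (strictAnti_mul_exp_neg_mul ha).antitone

lemma neg_abs_le_mul_exp_neg_mul {β : ℝ} (hβ : β ≤ 0) (x : ℝ) :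
    -|x| ≤ x * exp (-β * x) := by
  rcases le_or_gt 0 x with hx | hx
  · have : 0 ≤ x * exp (-β * x) := by positivity
    linarith [abs_nonneg x]
  · have hexp : exp (-β * x) ≤ 1 := exp_le_one_iff.mpr (by nlinarith)
    rw [abs_of_neg hx, neg_neg]
    nlinarith

section ExpTilt

variable {ι : Type*} [Fintype ι] (a : ι → ℝ)

lemma strictAnti_sum_mul_exp_neg_mul (h : ∃ j, a j ≠ 0) :
    StrictAnti fun β : ℝ => ∑ i, a i * exp (-β * a i) := by
  obtain ⟨j, hj⟩ := h
  intro β₁ β₂ hβ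
  exact sum_lt_sum (fun i _ => antitone_mul_exp_neg_mul (a i) hβ.le)
    ⟨j, mem_univ j, strictAnti_mul_exp_neg_mul hj hβ⟩

lemma exists_sum_mul_exp_neg_mul_pos (h : ∃ j, 0 < a j) :
    ∃ β, 0 < ∑ i, a i * exp (-β * a i) := by
  classical
  obtain ⟨j, hj⟩ := h
  set C := ∑ i, |a i|
  have hC0 : 0 ≤ C := sum_nonneg fun i _ => abs_nonneg (a i)
  have hC : ∑ i ∈ univ.erase j, |a i| ≤ C :=
    sum_le_sum_of_subset_of_nonneg (erase_subset j univ) fun i _ _ => abs_nonneg (a i)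
  -- `exp x ≥ 1 + x` makes the `j`-th term at least `a j + C + 1` at this `β`
  set β := -(C + 1) / a j ^ 2
  have hβ : β ≤ 0 := div_nonpos_of_nonpos_of_nonneg (by linarith) (sq_nonneg _)
  have hterm : a j + C + 1 ≤ a j * exp (-β * a j) := by
    have hexp := add_one_le_exp (-β * a j)
    have : -β * a j * a j = C + 1 := by simp only [β]; field_simp
    nlinarith
  have hrest :
      -∑ i ∈ univ.erase j, |a i| ≤ ∑ i ∈ univ.erase j, a i * exp (-β * a i) := by
    rw [← sum_neg_distrib]
    exact sum_le_sum fun i _ => neg_abs_le_mul_exp_neg_mul hβ (a i)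
  refine ⟨β, ?_⟩
  rw [← add_sum_erase _ _ (mem_univ j)]
  linarith

lemma exists_sum_mul_exp_neg_mul_neg (h : ∃ j, a j < 0) :
    ∃ β, ∑ i, a i * exp (-β * a i) < 0 := by
  obtain ⟨j, hj⟩ := h
  obtain ⟨β, hβ⟩ := exists_sum_mul_exp_neg_mul_pos (-a) ⟨j, neg_pos.mpr hj⟩
  refine ⟨-β, ?_⟩
  simp only [Pi.neg_apply, mul_neg, neg_mul, neg_neg, sum_neg_distrib, neg_pos] at hβ ⊢
  exact hβ

lemma existsUnique_sum_mul_exp_neg_mul_eq_zero (hpos : ∃ j, 0 < a j) (hneg : ∃ k, a k < 0) :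
    ∃! β, ∑ i, a i * exp (-β * a i) = 0 := by
  have hcont : Continuous fun β : ℝ => ∑ i, a i * exp (-β * a i) := by fun_prop
  obtain ⟨β, hβ⟩ := mem_range_of_exists_le_of_exists_ge hcont
    ((exists_sum_mul_exp_neg_mul_neg a hneg).imp fun _ => le_of_lt)
    ((exists_sum_mul_exp_neg_mul_pos a hpos).imp fun _ => le_of_lt)
  obtain ⟨j, hj⟩ := hpos
  exact ⟨β, hβ, fun γ hγ =>
    (strictAnti_sum_mul_exp_neg_mul a ⟨j, hj.ne'⟩).injective (hγ.trans hβ.symm)⟩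

lemma existsUnique_sum_sub_mul_exp_neg_mul_eq_zero (t : ℝ) (hlt : ∃ i, a i < t)
    (hgt : ∃ j, t < a j) : ∃! β, ∑ i, (a i - t) * exp (-β * a i) = 0 := by
  have hshift : ∀ β, ∑ i, (a i - t) * exp (-β * (a i - t))
      = exp (β * t) * ∑ i, (a i - t) * exp (-β * a i) := fun β => by
    rw [mul_sum]
    refine sum_congr rfl fun i _ => ?_
    rw [show -β * (a i - t) = β * t + -β * a i by ring, exp_add]
    ring
  refine (existsUnique_congr fun β => ?_).mp (existsUnique_sum_mul_exp_neg_mul_eq_zero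
    (fun i => a i - t) (hgt.imp fun _ => sub_pos.mpr) (hlt.imp fun _ => sub_neg.mpr))
  rw [hshift, mul_eq_zero, or_iff_right (exp_ne_zero _)]

end ExpTilt

theorem gibbs_lagrange_multiplier_existsUnique_general
    (n : ℕ) (hn : 0 < n) (e : Fin n → ℝ)
    (m : ℝ → ℝ)
    (hm : ∀ β, m β = (∑ i, (e i) ^ 2 * Real.exp (-β * (e i) ^ 2)) /
                     (∑ i, Real.exp (-β * (e i) ^ 2)))
    (t : ℝ)
    (htmin : Finset.univ.inf' (Finset.univ_nonempty_iff.mpr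
        (Fin.pos_iff_nonempty.mp hn)) (fun i => (e i) ^ 2) < t)
    (htmax : t < Finset.univ.sup' (Finset.univ_nonempty_iff.mpr
        (Fin.pos_iff_nonempty.mp hn)) (fun i => (e i) ^ 2)) :
    (∃! β : ℝ, m β = t) ∧
    (∃! β : ℝ, t * ∑ i, Real.exp (-β * (e i) ^ 2)
        = ∑ i, (e i) ^ 2 * Real.exp (-β * (e i) ^ 2)) := by
  obtain ⟨i, -, hi⟩ := (inf'_lt_iff _).mp htmin
  obtain ⟨j, -, hj⟩ := (lt_sup'_iff _).mp htmax
  have hroot :=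
    existsUnique_sum_sub_mul_exp_neg_mul_eq_zero (fun i => e i ^ 2) t ⟨i, hi⟩ ⟨j, hj⟩
  have hS : ∀ β, ∑ i, exp (-β * e i ^ 2) ≠ 0 := fun β =>
    (sum_pos (fun i _ => exp_pos _) ⟨i, mem_univ i⟩).ne'
  have hsplit : ∀ β, ∑ i, (e i ^ 2 - t) * exp (-β * e i ^ 2) = 0 ↔
      t * ∑ i, exp (-β * e i ^ 2) = ∑ i, e i ^ 2 * exp (-β * e i ^ 2) := fun β => by
    simp only [sub_mul, sum_sub_distrib, ← mul_sum]
    exact sub_eq_zero.trans eq_comm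
  refine ⟨(existsUnique_congr fun β => ?_).mp hroot, (existsUnique_congr hsplit).mp hroot⟩
  rw [hsplit, hm, div_eq_iff (hS β), eq_comm]

/-- Existence and uniqueness of the Lagrange multiplier `β` solving the
prescribed-mean-squared-error equation (Eq. (18)): if the squared errors are
not all equal and the target `t` lies strictly between the minimum and the
maximum of the squared errors, there is a unique `β` with `m β = t`,
equivalently `t * ∑ exp(-β e_i²) = ∑ e_i² exp(-β e_i²)`. -/
theorem gibbs_lagrange_multiplier_existsUnique
    (n : ℕ) (hn : 0 < n) (e : Fin n → ℝ)
    (hne : ∃ i j, (e i) ^ 2 ≠ (e j) ^ 2)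
    (m : ℝ → ℝ)
    (hm : ∀ β, m β = (∑ i, (e i) ^ 2 * Real.exp (-β * (e i) ^ 2)) /
                     (∑ i, Real.exp (-β * (e i) ^ 2)))
    (t : ℝ)
    (htmin : Finset.univ.inf' (Finset.univ_nonempty_iff.mpr
        (Fin.pos_iff_nonempty.mp hn)) (fun i => (e i) ^ 2) < t)
    (htmax : t < Finset.univ.sup' (Finset.univ_nonempty_iff.mpr
        (Fin.pos_iff_nonempty.mp hn)) (fun i => (e i) ^ 2)) :
    (∃! β : ℝ, m β = t) ∧
    (∃! β : ℝ, t * ∑ i, Real.exp (-β * (e i) ^ 2)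
        = ∑ i, (e i) ^ 2 * Real.exp (-β * (e i) ^ 2)) :=
  gibbs_lagrange_multiplier_existsUnique_general n hn e m hm t htmin htmax
end
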